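/- Define F : ℝ × ℝⁿ → ℝ by F(t, z) = f₀(ψ(t, z)) / det(D_zφ(t, ψ(t, z))) (equivalently, F(t, φ(t, z₀)) · det(D_zφ(t, z₀)) = f₀(z₀) for all z₀), i.e. F is the initial density f₀ transported by the flow as a density. Then F is C¹ and satisfies the continuity equation ∂_t F(t, z) + Σᵢ ∂_{zᵢ}(F(t, z) uᵢ(t, z)) = 0 for all (t, z). -/

import Mathlib

/-!
Along a trajectory `τ ↦ φ (τ, z₀)` the product `F (τ, φ (τ, z₀)) * det D_zφ (τ, z₀)` is the constant
`f₀ z₀`, so its time derivative vanishes. Swapping the mixed partials of the `C²` flow gives the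
variational equation `∂ₜ D_zφ = D_xu (t, φ) ∘ D_zφ`, and Liouville's formula turns it into
`∂ₜ det D_zφ = div u * det D_zφ`. Dividing by the determinant leaves `∂ₜF + D_zF u + F div u = 0`,
which is the continuity equation by the product rule for the divergence.
-/

namespace Matrix

variable {𝕜 ι : Type*} [NontriviallyNormedField 𝕜] [Fintype ι] [DecidableEq ι]

noncomputable def detContinuousMultilinearMap :
    ContinuousMultilinearMap 𝕜 (fun _ : ι => ι → 𝕜) 𝕜 :=
  { detRowAlternating.toMultilinearMap with cont := continuous_id.matrix_det }

@[simp]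
theorem detContinuousMultilinearMap_apply (A : Matrix ι ι 𝕜) :
    detContinuousMultilinearMap A = A.det := rfl

theorem hasDerivAt_det {A : 𝕜 → Matrix ι ι 𝕜} {A' : Matrix ι ι 𝕜} {t : 𝕜}
    (hA : ∀ i, HasDerivAt (fun τ => A τ i) (A' i) t) :
    HasDerivAt (fun τ => (A τ).det) (∑ i, ((A t).updateRow i (A' i)).det) t := by
  refine (HasFDerivAt.multilinear_comp detContinuousMultilinearMap
    fun i => (hA i).hasFDerivAt).hasDerivAt.congr_deriv ?_
  simp only [_root_.sum_apply, ContinuousLinearMap.comp_apply,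
    ContinuousLinearMap.toSpanSingleton_apply, one_smul,
    ContinuousMultilinearMap.toContinuousLinearMap_apply, updateRow]
  rfl

theorem sum_det_updateRow_mul {R : Type*} [CommRing R] (A B : Matrix ι ι R) :
    ∑ i, (A.updateRow i ((B * A) i)).det = B.trace * A.det := by
  have hrow : ∀ i, (B * A) i = ∑ k, B i k • A k := fun i => by
    ext j; simp [mul_apply, Finset.sum_apply]
  simp_rw [hrow, det_updateRow_sum, trace, Finset.sum_mul, smul_eq_mul, diag]

end Matrix

section Determinants

variable {𝕜 ι E : Type*} [NontriviallyNormedField 𝕜] [Fintype ι] [DecidableEq ι]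
  [NormedAddCommGroup E] [NormedSpace 𝕜 E]

theorem ContinuousLinearMap.det_eq_det_toMatrix' (L : (ι → 𝕜) →L[𝕜] ι → 𝕜) :
    L.det = (LinearMap.toMatrix' (L : (ι → 𝕜) →ₗ[𝕜] ι → 𝕜)).det :=
  (LinearMap.det_toMatrix' _).symm

theorem det_fderiv_eq_det_jacobianMatrix {g : (ι → 𝕜) → ι → 𝕜} {z : ι → 𝕜}
    (hg : DifferentiableAt 𝕜 g z) :
    (fderiv 𝕜 g z).det = (Matrix.of fun i j => fderiv 𝕜 (fun y => g y i) z (Pi.single j 1)).det := by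
  rw [ContinuousLinearMap.det_eq_det_toMatrix']
  congr 1
  ext i j
  simp [fderiv_apply hg]

theorem ContDiff.clm_det {L : E → (ι → 𝕜) →L[𝕜] ι → 𝕜} {k : WithTop ℕ∞} (hL : ContDiff 𝕜 k L) :
    ContDiff 𝕜 k fun x => (L x).det := by
  simp_rw [ContinuousLinearMap.det_eq_det_toMatrix', ← Matrix.detContinuousMultilinearMap_apply]
  exact Matrix.detContinuousMultilinearMap.contDiff.comp <| contDiff_pi.2 fun i =>
    contDiff_pi.2 fun j => contDiff_pi.1 (hL.clm_apply contDiff_const) i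

/-- Liouville's formula. -/
theorem hasDerivAt_det_of_hasDerivAt_comp {L : 𝕜 → (ι → 𝕜) →L[𝕜] ι → 𝕜}
    {A : (ι → 𝕜) →L[𝕜] ι → 𝕜} {t : 𝕜} (hL : HasDerivAt L (A.comp (L t)) t) :
    HasDerivAt (fun τ => (L τ).det)
      (LinearMap.trace 𝕜 _ (A : (ι → 𝕜) →ₗ[𝕜] ι → 𝕜) * (L t).det) t := by
  set M : 𝕜 → Matrix ι ι 𝕜 := fun τ => LinearMap.toMatrix' (L τ : (ι → 𝕜) →ₗ[𝕜] ι → 𝕜)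
  have hM : ∀ i, HasDerivAt (fun τ => M τ i)
      ((LinearMap.toMatrix' (A : (ι → 𝕜) →ₗ[𝕜] ι → 𝕜) * M t) i) t := fun i =>
    hasDerivAt_pi.2 fun j => by
      have hentry := hasDerivAt_pi.1 (hL.clm_apply (hasDerivAt_const t (Pi.single j 1))) i
      rw [← LinearMap.toMatrix'_mul]
      simpa [M] using hentry
  simp_rw [ContinuousLinearMap.det_eq_det_toMatrix']
  refine (Matrix.hasDerivAt_det hM).congr_deriv ?_
  rw [Matrix.sum_det_updateRow_mul, ← Matrix.trace_toLin'_eq, Matrix.toLin'_toMatrix']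

end Determinants

section PartialDerivatives

variable {E F : Type*} [NormedAddCommGroup E] [NormedSpace ℝ E]
  [NormedAddCommGroup F] [NormedSpace ℝ F] {f : ℝ × E → F} {t : ℝ} {z : E}

theorem fderiv_prodMk_right_eq_comp_inr (hf : DifferentiableAt ℝ f (t, z)) :
    fderiv ℝ (fun y => f (t, y)) z = (fderiv ℝ f (t, z)).comp (.inr ℝ ℝ E) :=
  (hf.hasFDerivAt.comp z (hasFDerivAt_prodMk_right t z)).fderiv

theorem deriv_prodMk_left_eq_fderiv_apply (hf : DifferentiableAt ℝ f (t, z)) :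
    deriv (fun τ => f (τ, z)) t = fderiv ℝ f (t, z) (1, 0) :=
  (hf.hasFDerivAt.comp_hasDerivAt t ((hasDerivAt_id t).prodMk (hasDerivAt_const t z))).deriv

theorem hasDerivAt_comp_prodMk {γ : ℝ → E} {γ' : E} (hf : DifferentiableAt ℝ f (t, γ t))
    (hγ : HasDerivAt γ γ' t) :
    HasDerivAt (fun τ => f (τ, γ τ))
      (deriv (fun τ => f (τ, γ t)) t + fderiv ℝ (fun y => f (t, y)) (γ t) γ') t := by
  have h := hf.hasFDerivAt.comp_hasDerivAt t ((hasDerivAt_id t).prodMk hγ)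
  rw [show ((1 : ℝ), γ') = (1, 0) + (0, γ') by simp, map_add,
    ← deriv_prodMk_left_eq_fderiv_apply hf] at h
  rwa [fderiv_prodMk_right_eq_comp_inr hf]

theorem ContDiff.hasDerivAt_fderiv_prodMk_right_comm (hf : ContDiff ℝ 2 f) (t : ℝ) (z : E) :
    HasDerivAt (fun τ => fderiv ℝ (fun y => f (τ, y)) z)
      (fderiv ℝ (fun y => deriv (fun τ => f (τ, y)) t) z) t := by
  have hf₁ : Differentiable ℝ f := hf.differentiable (by norm_num)
  have hD : ContDiff ℝ 1 (fderiv ℝ f) := hf.fderiv_right (by norm_num)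
  have hD₁ : Differentiable ℝ (fderiv ℝ f) := hD.differentiable one_ne_zero
  rw [funext fun τ => fderiv_prodMk_right_eq_comp_inr (hf₁ (τ, z)),
    funext fun y => deriv_prodMk_left_eq_fderiv_apply (hf₁ (t, y))]
  have hcurve : HasDerivAt (fun τ => fderiv ℝ f (τ, z)) (fderiv ℝ (fderiv ℝ f) (t, z) (1, 0)) t :=
    (hD₁ (t, z)).hasFDerivAt.comp_hasDerivAt t ((hasDerivAt_id t).prodMk (hasDerivAt_const t z))
  refine (hcurve.clm_comp (hasDerivAt_const t (ContinuousLinearMap.inr ℝ ℝ E))).congr_deriv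
    (ContinuousLinearMap.ext fun v => ?_)
  have hsymm : IsSymmSndFDerivAt ℝ f (t, z) := hf.contDiffAt.isSymmSndFDerivAt (by simp)
  rw [fderiv_prodMk_right_eq_comp_inr ((hD₁.clm_apply (differentiable_const _)) _),
    fderiv_clm_apply (hD₁ _) (differentiableAt_const _)]
  simpa using hsymm (1, 0) (0, v)

theorem hasDerivAt_fderiv_flow {u φ : ℝ × E → E} (hφ : ContDiff ℝ 2 φ)
    (hu : DifferentiableAt ℝ u (t, φ (t, z)))
    (hflow : ∀ y, deriv (fun τ => φ (τ, y)) t = u (t, φ (t, y))) :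
    HasDerivAt (fun τ => fderiv ℝ (fun y => φ (τ, y)) z)
      ((fderiv ℝ (fun x => u (t, x)) (φ (t, z))).comp (fderiv ℝ (fun y => φ (t, y)) z)) t := by
  have hφ₁ : Differentiable ℝ φ := hφ.differentiable (by norm_num)
  have hφt : DifferentiableAt ℝ (fun y => φ (t, y)) z := by fun_prop
  have hut : DifferentiableAt ℝ (fun x => u (t, x)) (φ (t, z)) := by fun_prop
  have h := hφ.hasDerivAt_fderiv_prodMk_right_comm t z
  rwa [funext hflow, fderiv_fun_comp z hut hφt] at h

end PartialDerivatives

theorem sum_fderiv_mul_apply_single {𝕜 ι : Type*} [NontriviallyNormedField 𝕜] [Fintype ι]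
    [DecidableEq ι] {g : (ι → 𝕜) → 𝕜} {w : (ι → 𝕜) → ι → 𝕜} {z : ι → 𝕜}
    (hg : DifferentiableAt 𝕜 g z) (hw : DifferentiableAt 𝕜 w z) :
    ∑ i, fderiv 𝕜 (fun y => g y * w y i) z (Pi.single i 1) =
      fderiv 𝕜 g z (w z) + g z * LinearMap.trace 𝕜 _ (fderiv 𝕜 w z : (ι → 𝕜) →ₗ[𝕜] ι → 𝕜) := by
  have hwi : ∀ i, DifferentiableAt 𝕜 (fun y => w y i) z := differentiableAt_pi.1 hw
  simp_rw [fderiv_fun_mul hg (hwi _), fderiv_apply hw]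
  conv_rhs => rw [pi_eq_sum_univ' (w z), map_sum]
  rw [LinearMap.trace_eq_matrix_trace 𝕜 (Pi.basisFun 𝕜 ι)]
  simp only [add_apply, smul_apply, ContinuousLinearMap.comp_apply,
    ContinuousLinearMap.proj_apply, smul_eq_mul, Finset.sum_add_distrib, map_smul, Matrix.trace,
    LinearMap.toMatrix_eq_toMatrix', Matrix.diag_apply, LinearMap.toMatrix'_apply,
    ContinuousLinearMap.coe_coe, Finset.mul_sum]
  exact add_comm _ _

theorem stmt19_general {n : ℕ}
    (u : ℝ × (Fin n → ℝ) → Fin n → ℝ) (hu : ContDiff ℝ 1 u)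
    (φ ψ : ℝ × (Fin n → ℝ) → Fin n → ℝ)
    (hφ : ContDiff ℝ 2 φ) (hψ : ContDiff ℝ 1 ψ)
    (hflow : ∀ t z, deriv (fun τ => φ (τ, z)) t = u (t, φ (t, z)))
    (hinv₁ : ∀ t z, ψ (t, φ (t, z)) = z)
    (hinv₂ : ∀ t z, φ (t, ψ (t, z)) = z)
    (J : ℝ → (Fin n → ℝ) → Matrix (Fin n) (Fin n) ℝ)
    (hJ : ∀ t z, J t z = Matrix.of fun i j => fderiv ℝ (fun y => φ (t, y) i) z (Pi.single j 1))
    (hdet : ∀ t z, (J t z).det ≠ 0)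
    (f₀ : (Fin n → ℝ) → ℝ) (hf₀ : ContDiff ℝ 1 f₀)
    (F : ℝ × (Fin n → ℝ) → ℝ)
    (hF : ∀ t z, F (t, z) = f₀ (ψ (t, z)) / (J t (ψ (t, z))).det) :
    ContDiff ℝ 1 F ∧
      ∀ (t : ℝ) (z : Fin n → ℝ),
        deriv (fun τ => F (τ, z)) t
          + (∑ i : Fin n, fderiv ℝ (fun y => F (t, y) * u (t, y) i) z (Pi.single i 1)) = 0 := by
  have hφ₁ : Differentiable ℝ φ := hφ.differentiable (by norm_num)
  have hJdet : ∀ t z, (J t z).det = (fderiv ℝ (fun y => φ (t, y)) z).det := fun t z => by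
    rw [hJ, det_fderiv_eq_det_jacobianMatrix (by fun_prop)]
  have hFC1 : ContDiff ℝ 1 F := by
    have hDφ : ContDiff ℝ 1 fun p => fderiv ℝ (fun y => φ (p.1, y)) (ψ p) :=
      ContDiff.fderiv (hφ.comp (contDiff_fst.fst.prodMk contDiff_snd)) hψ (by norm_num)
    rw [show F = fun p => f₀ (ψ p) / (fderiv ℝ (fun y => φ (p.1, y)) (ψ p)).det from
      funext fun p => by rw [← hJdet, ← hF]]
    exact (hf₀.comp hψ).div hDφ.clm_det fun p => hJdet p.1 (ψ p) ▸ hdet p.1 (ψ p)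
  refine ⟨hFC1, fun t z => ?_⟩
  obtain ⟨z₀, rfl⟩ : ∃ z₀, φ (t, z₀) = z := ⟨ψ (t, z), hinv₂ t z⟩
  have hu₁ : Differentiable ℝ u := hu.differentiable one_ne_zero
  have hF₁ : Differentiable ℝ F := hFC1.differentiable one_ne_zero
  have hγ : HasDerivAt (fun τ => φ (τ, z₀)) (u (t, φ (t, z₀))) t :=
    hflow t z₀ ▸ (show DifferentiableAt ℝ (fun τ => φ (τ, z₀)) t by fun_prop).hasDerivAt
  have hFγ := hasDerivAt_comp_prodMk (hF₁ _) hγ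
  have hdetγ := hasDerivAt_det_of_hasDerivAt_comp
    (hasDerivAt_fderiv_flow (z := z₀) hφ (hu₁ _) (hflow t))
  have hconst : ∀ τ, F (τ, φ (τ, z₀)) * (fderiv ℝ (fun y => φ (τ, y)) z₀).det = f₀ z₀ := by
    intro τ
    rw [hF, hinv₁, hJdet, div_mul_cancel₀ _ (hJdet τ z₀ ▸ hdet τ z₀)]
  have hzero := (hFγ.mul hdetγ).unique ((funext hconst).symm ▸ hasDerivAt_const t (f₀ z₀))
  rw [sum_fderiv_mul_apply_single (g := fun y => F (t, y)) (w := fun y => u (t, y))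
    (by fun_prop) (by fun_prop)]
  refine (mul_left_inj' (hJdet t z₀ ▸ hdet t z₀)).1 ?_
  linear_combination hzero

/-- the initial density `f₀` transported by the flow `φ` of `u` as a
density, `F(t, φ(t,z₀)) · det(D_zφ(t,z₀)) = f₀(z₀)`, i.e.
`F(t,z) = f₀(ψ(t,z)) / det(D_zφ(t, ψ(t,z)))` where `ψ(t,·) = φ(t,·)⁻¹`, is C¹ and
satisfies the continuity equation `∂ₜF + Σᵢ ∂_{zᵢ}(F uᵢ) = 0`. -/
theorem stmt19 {n : ℕ}
    (u : ℝ × (Fin n → ℝ) → Fin n → ℝ) (hu : ContDiff ℝ 1 u)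
    (φ ψ : ℝ × (Fin n → ℝ) → Fin n → ℝ)
    (hφ : ContDiff ℝ 2 φ) (hψ : ContDiff ℝ 1 ψ)
    (hflow : ∀ t z, deriv (fun τ => φ (τ, z)) t = u (t, φ (t, z)))
    (hinit : ∀ z, φ (0, z) = z)
    (hinv₁ : ∀ t z, ψ (t, φ (t, z)) = z)
    (hinv₂ : ∀ t z, φ (t, ψ (t, z)) = z)
    (J : ℝ → (Fin n → ℝ) → Matrix (Fin n) (Fin n) ℝ)
    (hJ : ∀ t z, J t z = Matrix.of fun i j => fderiv ℝ (fun y => φ (t, y) i) z (Pi.single j 1))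
    (hdet : ∀ t z, (J t z).det ≠ 0)
    (f₀ : (Fin n → ℝ) → ℝ) (hf₀ : ContDiff ℝ 1 f₀)
    (F : ℝ × (Fin n → ℝ) → ℝ)
    (hF : ∀ t z, F (t, z) = f₀ (ψ (t, z)) / (J t (ψ (t, z))).det) :
    ContDiff ℝ 1 F ∧
      ∀ (t : ℝ) (z : Fin n → ℝ),
        deriv (fun τ => F (τ, z)) t
          + (∑ i : Fin n, fderiv ℝ (fun y => F (t, y) * u (t, y) i) z (Pi.single i 1)) = 0 :=
  stmt19_general u hu φ ψ hφ hψ hflow hinv₁ hinv₂ J hJ hdet f₀ hf₀ F hF
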